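/- arXiv:1803.07763 — 3 statements merged into one kernel-verified Lean document; each statement's English description precedes it below -/
import Mathlib

section
/- For any δ > 0, any integer k ∈ {1, …, d}, any k-dimensional orthogonal projection Π_k of ℝ^d, and any θ* ∈ E, the localized Gaussian width satisfies G(E_{θ*} ∩ B(δ)) ≤ δ·√k + inf_{γ ∈ Γ(θ*, δ, Π_k)} √(Σ_{i=1}^d γ_i). -/
open MeasureTheory ProbabilityTheory Metric Set Filter
open scoped BigOperators ENNReal NNReal RealInnerProductSpace Classical

noncomputable section

namespace GaussKol

/-- The standard Gaussian measure on `EuclideanSpace ℝ (Fin d)`. -/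
def stdGaussian (d : ℕ) : Measure (EuclideanSpace ℝ (Fin d)) :=
  (Measure.pi fun _ : Fin d => gaussianReal 0 1).map
    (MeasurableEquiv.toLp 2 (Fin d → ℝ))

/-- The Gaussian width of a set `S ⊆ ℝ^d`. -/
def gaussianWidth {d : ℕ} (S : Set (EuclideanSpace ℝ (Fin d))) : ℝ :=
  ∫ w, (⨆ u ∈ S, ⟪w, u⟫) ∂(stdGaussian d)

/-- The ellipse with aspect ratios `μ`. -/
def ellipse {d : ℕ} (μ : Fin d → ℝ) : Set (EuclideanSpace ℝ (Fin d)) :=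
  {θ | ∑ j, θ j ^ 2 / μ j ≤ 1}

/-- The squared elliptical norm. -/
def enormSq {d : ℕ} (μ : Fin d → ℝ) (θ : EuclideanSpace ℝ (Fin d)) : ℝ :=
  ∑ j, θ j ^ 2 / μ j

/-- The recentered ellipse `E_{θ*}`. -/
def shiftedEllipse {d : ℕ} (μ : Fin d → ℝ) (θs : EuclideanSpace ℝ (Fin d)) :
    Set (EuclideanSpace ℝ (Fin d)) :=
  (fun θ => θ - θs) '' ellipse μ

/-- Orthogonal projection onto a subspace, as a self-map of `ℝ^d`. -/
def projK {d : ℕ} (K : Submodule ℝ (EuclideanSpace ℝ (Fin d)))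
    (x : EuclideanSpace ℝ (Fin d)) : EuclideanSpace ℝ (Fin d) :=
  (K.orthogonalProjectionOnto x : EuclideanSpace ℝ (Fin d))

/-- The Kolmogorov `k`-width of a set `S ⊆ ℝ^d`. -/
def kolWidth {d : ℕ} (k : ℕ) (S : Set (EuclideanSpace ℝ (Fin d))) : ℝ :=
  ⨅ K : {K : Submodule ℝ (EuclideanSpace ℝ (Fin d)) // Module.finrank ℝ K = k},
    ⨆ θ ∈ S, ‖θ - projK K.1 θ‖

/-- The critical dimension `k(θ*, δ)`. -/
def critDim {d : ℕ} (η : ℝ) (μ : Fin d → ℝ) (θs : EuclideanSpace ℝ (Fin d)) (δ : ℝ) : ℕ :=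
  sInf {k : ℕ | 1 ≤ k ∧ k ≤ d ∧
    kolWidth k (shiftedEllipse μ θs ∩ closedBall 0 ((1 - η) * δ)) ≤ (9 / 10) * δ}

/-- The set `Γ(θ*, δ, Π_k)`. -/
def Gam {d : ℕ} (μ : Fin d → ℝ) (θs : EuclideanSpace ℝ (Fin d)) (δ : ℝ)
    (K : Submodule ℝ (EuclideanSpace ℝ (Fin d))) : Set (Fin d → ℝ) :=
  {γ | (∀ i, 0 < γ i) ∧
    ∀ Δ ∈ shiftedEllipse μ θs ∩ closedBall 0 δ,
      ∑ i, (Δ i - projK K Δ i) ^ 2 / γ i ≤ 1}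

/-- The function `Φ`. -/
def Phi {d : ℕ} (η : ℝ) (μ : Fin d → ℝ) (θs : EuclideanSpace ℝ (Fin d)) (δ : ℝ) : ℝ :=
  if ‖θs‖ / (1 - η) < δ then 1
  else min 1 (sInf {r : ℝ | 0 ≤ r ∧
    δ ^ 2 ≤ ((1 - η) ^ 2)⁻¹ * ∑ i, r ^ 2 * θs i ^ 2 / (r + μ i) ^ 2})

/-- `Φ⁻¹(x)`: the largest `δ > 0` with `Φ(δ) ≤ x` (equal to `∞` when unbounded). -/
def PhiInv {d : ℕ} (η : ℝ) (μ : Fin d → ℝ) (θs : EuclideanSpace ℝ (Fin d)) (x : ℝ) : ℝ≥0∞ :=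
  ⨆ (δ : ℝ) (_ : 0 < δ ∧ Phi η μ θs δ ≤ x), ENNReal.ofReal δ

/-- The `ε`-packing number of `S` in Euclidean distance. -/
def packingNumber {d : ℕ} (ε : ℝ) (S : Set (EuclideanSpace ℝ (Fin d))) : ℕ :=
  sSup {n : ℕ | ∃ T : Finset (EuclideanSpace ℝ (Fin d)),
    ↑T ⊆ S ∧ (∀ x ∈ T, ∀ y ∈ T, x ≠ y → ε < dist x y) ∧ T.card = n}

/-- Regularity of the ellipse at `θ*`, with explicit constant `c`. -/
def regularAtWith {d : ℕ} (η : ℝ) (μ : Fin d → ℝ) (θs : EuclideanSpace ℝ (Fin d))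
    (c : ℝ) : Prop :=
  ∀ δ : ℝ, 0 < δ →
    ∃ K : Submodule ℝ (EuclideanSpace ℝ (Fin d)),
      Module.finrank ℝ K = critDim η μ θs δ ∧
      (⨆ θ ∈ shiftedEllipse μ θs ∩ closedBall 0 ((1 - η) * δ), ‖θ - projK K θ‖)
        ≤ kolWidth (critDim η μ θs δ) (shiftedEllipse μ θs ∩ closedBall 0 ((1 - η) * δ)) ∧
      sInf ((fun γ : Fin d → ℝ => ∑ i, γ i) '' Gam μ θs δ K)
        ≤ c * δ ^ 2 * critDim η μ θs δ

/-- The minimax risk of estimation over the ellipse with noise level `σ`. -/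
def minimaxRisk (d : ℕ) (μ : Fin d → ℝ) (σ : ℝ) : ℝ :=
  ⨅ est : {f : EuclideanSpace ℝ (Fin d) → EuclideanSpace ℝ (Fin d) // Measurable f},
    ⨆ θs ∈ ellipse μ, ∫ w, ‖est.1 (θs + σ • w) - θs‖ ^ 2 ∂(stdGaussian d)

end GaussKol

open GaussKol

/-! For `γ ∈ Γ(θ*, δ, Π_k)` and `u` in the localized set, split
`⟪w, u⟫ = ⟪Π_k w, u⟫ + ⟪w, u - Π_k u⟫`. The first term is at most `δ ‖Π_k w‖` since `‖u‖ ≤ δ`;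
Cauchy–Schwarz weighted by `γ` bounds the second by `√(∑ γ_i w_i²)`, because
`∑ (u_i - (Π_k u)_i)² / γ_i ≤ 1`. Jensen's inequality for the square root, with
`E ‖Π_k w‖² = k` and `E w_i² = 1`, bounds the expectations of the two terms by `δ √k` and
`√(∑ γ_i)`. -/

section Jensen

variable {α : Type*} [MeasurableSpace α] {ν : Measure α} {f : α → ℝ}

lemma integrable_sqrt [IsFiniteMeasure ν] (hf : Integrable f ν) (hf₀ : 0 ≤ᵐ[ν] f) :
    Integrable (fun x ↦ √(f x)) ν := by
  refine ((memLp_two_iff_integrable_sq ?_).2 ?_).integrable one_le_two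
  · exact Real.continuous_sqrt.comp_aestronglyMeasurable hf.aestronglyMeasurable
  · exact hf.congr (hf₀.mono fun x hx ↦ (Real.sq_sqrt hx).symm)

lemma integral_sqrt_le_sqrt_integral [IsProbabilityMeasure ν] (hf : Integrable f ν)
    (hf₀ : 0 ≤ᵐ[ν] f) : ∫ x, √(f x) ∂ν ≤ √(∫ x, f x ∂ν) :=
  Real.strictConcaveOn_sqrt.concaveOn.le_map_integral Real.continuous_sqrt.continuousOn
    isClosed_Ici hf₀ hf (integrable_sqrt hf hf₀)

end Jensen

lemma sum_mul_le_sqrt_mul_sqrt_of_pos {ι : Type*} (s : Finset ι) (x y γ : ι → ℝ)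
    (hγ : ∀ i ∈ s, 0 < γ i) :
    ∑ i ∈ s, x i * y i ≤ √(∑ i ∈ s, γ i * x i ^ 2) * √(∑ i ∈ s, y i ^ 2 / γ i) := by
  have hA : 0 ≤ ∑ i ∈ s, γ i * x i ^ 2 :=
    Finset.sum_nonneg fun i hi ↦ mul_nonneg (hγ i hi).le (sq_nonneg _)
  rw [← Real.sqrt_mul hA]
  refine Real.le_sqrt_of_sq_le (Finset.sum_sq_le_sum_mul_sum_of_sq_le_mul s
    (fun i hi ↦ mul_nonneg (hγ i hi).le (sq_nonneg _))
    (fun i hi ↦ div_nonneg (sq_nonneg _) (hγ i hi).le) fun i hi ↦ le_of_eq ?_)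
  field_simp [(hγ i hi).ne']

lemma norm_starProjection_sq_eq_sum {E : Type*} [NormedAddCommGroup E] [InnerProductSpace ℝ E]
    (K : Submodule ℝ E) [FiniteDimensional ℝ K] (x : E) :
    ‖K.starProjection x‖ ^ 2 = ∑ j, ⟪(stdOrthonormalBasis ℝ K j : E), x⟫ ^ 2 := by
  rw [Submodule.starProjection_apply, ← Submodule.coe_norm,
    ← (stdOrthonormalBasis ℝ K).sum_sq_inner_right]
  congr! 2 with j
  rw [Submodule.coe_inner, ← Submodule.starProjection_apply,
    ← Submodule.inner_starProjection_left_eq_right,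
    Submodule.starProjection_eq_self_iff.2 (Submodule.coe_mem _)]

section StdGaussian

variable {E : Type*} [NormedAddCommGroup E] [InnerProductSpace ℝ E] [FiniteDimensional ℝ E]
  [MeasurableSpace E] [BorelSpace E]

lemma integrable_inner_sq_stdGaussian (v : E) :
    Integrable (fun x ↦ ⟪v, x⟫ ^ 2) (stdGaussian E) :=
  (IsGaussian.memLp_dual _ (innerSL ℝ v) 2 (by simp)).integrable_sq

lemma integral_inner_sq_stdGaussian (v : E) :
    ∫ x, ⟪v, x⟫ ^ 2 ∂stdGaussian E = ‖v‖ ^ 2 := by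
  have h := covarianceBilin_apply (μ := stdGaussian E) IsGaussian.memLp_two_id v v
  rw [covarianceBilin_stdGaussian, innerSL_apply_apply ℝ, real_inner_self_eq_norm_sq] at h
  simpa [sq] using h.symm

lemma integral_norm_starProjection_stdGaussian_le (K : Submodule ℝ E) :
    ∫ x, ‖K.starProjection x‖ ∂stdGaussian E ≤ √(Module.finrank ℝ K) := by
  have hint : Integrable (fun x ↦ ‖K.starProjection x‖ ^ 2) (stdGaussian E) := by
    simp_rw [norm_starProjection_sq_eq_sum]
    exact integrable_finsetSum _ fun j _ ↦ integrable_inner_sq_stdGaussian _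
  have hmoment : ∫ x, ‖K.starProjection x‖ ^ 2 ∂stdGaussian E = Module.finrank ℝ K := by
    simp_rw [norm_starProjection_sq_eq_sum]
    rw [integral_finsetSum _ fun j _ ↦ integrable_inner_sq_stdGaussian _]
    simp [integral_inner_sq_stdGaussian, Submodule.norm_coe, OrthonormalBasis.norm_eq_one]
  calc ∫ x, ‖K.starProjection x‖ ∂stdGaussian E
      = ∫ x, √(‖K.starProjection x‖ ^ 2) ∂stdGaussian E := by simp
    _ ≤ √(Module.finrank ℝ K) :=
      hmoment ▸ integral_sqrt_le_sqrt_integral hint (.of_forall fun _ ↦ sq_nonneg _)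

end StdGaussian

section Coordinates

variable {ι : Type*} [Fintype ι]

lemma coord_eq_inner_single (x : EuclideanSpace ℝ ι) (i : ι) :
    x i = ⟪EuclideanSpace.single i 1, x⟫ := by
  simp [EuclideanSpace.inner_single_left]

lemma integrable_sum_mul_sq_stdGaussian (γ : ι → ℝ) :
    Integrable (fun x : EuclideanSpace ℝ ι ↦ ∑ i, γ i * x i ^ 2)
      (stdGaussian (EuclideanSpace ℝ ι)) := by
  simp_rw [coord_eq_inner_single]
  exact integrable_finsetSum _ fun i _ ↦ (integrable_inner_sq_stdGaussian _).const_mul _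

lemma integral_sum_mul_sq_stdGaussian (γ : ι → ℝ) :
    ∫ x, ∑ i, γ i * x i ^ 2 ∂stdGaussian (EuclideanSpace ℝ ι) = ∑ i, γ i := by
  simp_rw [coord_eq_inner_single]
  rw [integral_finsetSum _ fun i _ ↦ (integrable_inner_sq_stdGaussian _).const_mul _]
  simp [integral_const_mul, integral_inner_sq_stdGaussian]

lemma integral_sqrt_sum_mul_sq_stdGaussian_le {γ : ι → ℝ} (hγ : ∀ i, 0 ≤ γ i) :
    ∫ x, √(∑ i, γ i * x i ^ 2) ∂stdGaussian (EuclideanSpace ℝ ι) ≤ √(∑ i, γ i) :=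
  integral_sum_mul_sq_stdGaussian γ ▸ integral_sqrt_le_sqrt_integral
    (integrable_sum_mul_sq_stdGaussian γ)
    (.of_forall fun _ ↦ Finset.sum_nonneg fun i _ ↦ mul_nonneg (hγ i) (sq_nonneg _))

end Coordinates

lemma GaussKol.stdGaussian_eq (d : ℕ) :
    GaussKol.stdGaussian d = ProbabilityTheory.stdGaussian (EuclideanSpace ℝ (Fin d)) :=
  map_pi_eq_stdGaussian

lemma gaussianWidth_le_integral {d : ℕ} {S : Set (EuclideanSpace ℝ (Fin d))} (h₀ : 0 ∈ S)
    {g : EuclideanSpace ℝ (Fin d) → ℝ}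
    (hg : Integrable g (ProbabilityTheory.stdGaussian (EuclideanSpace ℝ (Fin d))))
    (hle : ∀ w, ∀ u ∈ S, ⟪w, u⟫ ≤ g w) :
    gaussianWidth S ≤ ∫ w, g w ∂ProbabilityTheory.stdGaussian (EuclideanSpace ℝ (Fin d)) := by
  have hg₀ (w) : 0 ≤ g w := by simpa using hle w 0 h₀
  have hsup_le (w) : ⨆ u ∈ S, ⟪w, u⟫ ≤ g w :=
    Real.iSup_le (fun u ↦ Real.iSup_le (hle w u) (hg₀ w)) (hg₀ w)
  have hsup_nonneg (w) : 0 ≤ ⨆ u ∈ S, ⟪w, u⟫ := by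
    have hbdd : BddAbove (range fun u ↦ ⨆ _ : u ∈ S, ⟪w, u⟫) :=
      ⟨g w, forall_mem_range.2 fun u ↦ Real.iSup_le (hle w u) (hg₀ w)⟩
    refine le_trans ?_ (le_ciSup hbdd 0)
    simp [ciSup_pos h₀]
  rw [gaussianWidth, GaussKol.stdGaussian_eq]
  -- The supremum need not be measurable; `integral_mono_of_nonneg` does not require it.
  exact integral_mono_of_nonneg (.of_forall hsup_nonneg) hg (.of_forall hsup_le)

section Ellipse

variable {d : ℕ} {μ : Fin d → ℝ} {θs : EuclideanSpace ℝ (Fin d)} {δ : ℝ}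
  {K : Submodule ℝ (EuclideanSpace ℝ (Fin d))}

lemma zero_mem_shiftedEllipse (hθs : θs ∈ ellipse μ) : 0 ∈ shiftedEllipse μ θs :=
  ⟨θs, hθs, sub_self θs⟩

lemma const_mem_Gam (hδ : 0 < δ) : (fun _ ↦ δ ^ 2) ∈ Gam μ θs δ K := by
  refine ⟨fun _ ↦ by positivity, fun Δ hΔ ↦ ?_⟩
  have hΔ : ‖Δ‖ ≤ δ := by simpa using hΔ.2
  have hres : ‖Δ - projK K Δ‖ ≤ δ :=
    (K.starProjection_orthogonal_val Δ ▸ Kᗮ.norm_starProjection_apply_le Δ).trans hΔ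
  rw [← Finset.sum_div, div_le_one (by positivity)]
  simpa [EuclideanSpace.real_norm_sq_eq] using pow_le_pow_left₀ (norm_nonneg _) hres 2

lemma inner_le_of_mem_Gam {γ : Fin d → ℝ} (hγ : γ ∈ Gam μ θs δ K)
    {u : EuclideanSpace ℝ (Fin d)} (hu : u ∈ shiftedEllipse μ θs ∩ closedBall 0 δ)
    (w : EuclideanSpace ℝ (Fin d)) :
    ⟪w, u⟫ ≤ δ * ‖projK K w‖ + √(∑ i, γ i * w i ^ 2) := by
  have hproj : ⟪w, projK K u⟫ ≤ δ * ‖projK K w‖ :=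
    calc ⟪w, projK K u⟫ = ⟪projK K w, u⟫ := (K.inner_starProjection_left_eq_right w u).symm
      _ ≤ ‖projK K w‖ * ‖u‖ := real_inner_le_norm _ _
      _ ≤ δ * ‖projK K w‖ := by
        rw [mul_comm]; exact mul_le_mul_of_nonneg_right (by simpa using hu.2) (norm_nonneg _)
  have hres : ⟪w, u - projK K u⟫ ≤ √(∑ i, γ i * w i ^ 2) :=
    calc ⟪w, u - projK K u⟫ = ∑ i, w i * (u i - projK K u i) := by
          simp [PiLp.inner_apply, mul_comm]
      _ ≤ √(∑ i, γ i * w i ^ 2) * √(∑ i, (u i - projK K u i) ^ 2 / γ i) :=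
          sum_mul_le_sqrt_mul_sqrt_of_pos _ _ _ _ fun i _ ↦ hγ.1 i
      _ ≤ √(∑ i, γ i * w i ^ 2) := by
          simpa using mul_le_mul_of_nonneg_left (Real.sqrt_le_one.2 (hγ.2 u hu))
            (Real.sqrt_nonneg (∑ i, γ i * w i ^ 2))
  calc ⟪w, u⟫ = ⟪w, projK K u⟫ + ⟪w, u - projK K u⟫ := by rw [← inner_add_right, add_sub_cancel]
    _ ≤ _ := add_le_add hproj hres

theorem gaussianWidth_le_of_mem_Gam (hδ : 0 ≤ δ) (hθs : θs ∈ ellipse μ) {γ : Fin d → ℝ}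
    (hγ : γ ∈ Gam μ θs δ K) :
    gaussianWidth (shiftedEllipse μ θs ∩ closedBall 0 δ)
      ≤ δ * √(Module.finrank ℝ K) + √(∑ i, γ i) := by
  have hA : Integrable (fun w ↦ δ * ‖projK K w‖)
      (ProbabilityTheory.stdGaussian (EuclideanSpace ℝ (Fin d))) :=
    ((K.starProjection.integrable_comp IsGaussian.integrable_id).norm).const_mul δ
  have hB := integrable_sqrt (integrable_sum_mul_sq_stdGaussian γ) (.of_forall fun _ ↦
    Finset.sum_nonneg fun i _ ↦ mul_nonneg (hγ.1 i).le (sq_nonneg _))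
  calc gaussianWidth (shiftedEllipse μ θs ∩ closedBall 0 δ)
      ≤ ∫ w, δ * ‖projK K w‖ + √(∑ i, γ i * w i ^ 2)
          ∂ProbabilityTheory.stdGaussian (EuclideanSpace ℝ (Fin d)) :=
        gaussianWidth_le_integral (mem_inter (zero_mem_shiftedEllipse hθs) (by simpa using hδ))
          (hA.add hB) fun w _ hu ↦ inner_le_of_mem_Gam hγ hu w
    _ = δ * ∫ w, ‖projK K w‖ ∂ProbabilityTheory.stdGaussian (EuclideanSpace ℝ (Fin d))
          + ∫ w, √(∑ i, γ i * w i ^ 2)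
            ∂ProbabilityTheory.stdGaussian (EuclideanSpace ℝ (Fin d)) := by
        rw [integral_add hA hB, integral_const_mul]
    _ ≤ δ * √(Module.finrank ℝ K) + √(∑ i, γ i) :=
        add_le_add (mul_le_mul_of_nonneg_left (integral_norm_starProjection_stdGaussian_le K) hδ)
          (integral_sqrt_sum_mul_sq_stdGaussian_le fun i ↦ (hγ.1 i).le)

end Ellipse

theorem localized_gaussian_width_upper_bound_general
    {d : ℕ} (μ : Fin d → ℝ)
    (δ : ℝ) (hδ : 0 < δ)
    (k : ℕ)
    (K : Submodule ℝ (EuclideanSpace ℝ (Fin d))) (hK : Module.finrank ℝ K = k)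
    (θs : EuclideanSpace ℝ (Fin d)) (hθs : θs ∈ ellipse μ) :
    gaussianWidth (shiftedEllipse μ θs ∩ closedBall 0 δ)
      ≤ δ * Real.sqrt k +
        sInf ((fun γ : Fin d → ℝ => Real.sqrt (∑ i, γ i)) '' Gam μ θs δ K) := by
  subst hK
  rw [← sub_le_iff_le_add']
  refine le_csInf ⟨_, _, const_mem_Gam hδ, rfl⟩ ?_
  rintro _ ⟨γ, hγ, rfl⟩
  exact sub_le_iff_le_add'.2 (gaussianWidth_le_of_mem_Gam hδ.le hθs hγ)

/-- **Theorem 1 (upper bound on the localized Gaussian width).**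
For any `δ > 0`, any `k ∈ {1, …, d}`, any `k`-dimensional orthogonal projection (given by a
`k`-dimensional subspace `K`), and any `θ* ∈ E`,
`G(E_{θ*} ∩ B(δ)) ≤ δ √k + inf_{γ ∈ Γ(θ*, δ, Π_k)} √(∑ i γ i)`. -/
theorem localized_gaussian_width_upper_bound
    {d : ℕ} (μ : Fin d → ℝ) (hμpos : ∀ i, 0 < μ i)
    (hμmono : ∀ i j : Fin d, i ≤ j → μ j ≤ μ i)
    (δ : ℝ) (hδ : 0 < δ)
    (k : ℕ) (hk1 : 1 ≤ k) (hkd : k ≤ d)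
    (K : Submodule ℝ (EuclideanSpace ℝ (Fin d))) (hK : Module.finrank ℝ K = k)
    (θs : EuclideanSpace ℝ (Fin d)) (hθs : θs ∈ ellipse μ) :
    gaussianWidth (shiftedEllipse μ θs ∩ closedBall 0 δ)
      ≤ δ * Real.sqrt k +
        sInf ((fun γ : Fin d → ℝ => Real.sqrt (∑ i, γ i)) '' Gam μ θs δ K) :=
  localized_gaussian_width_upper_bound_general μ δ hδ k K hK θs hθs
end
end

section
/- There exist universal constants c_ℓ > 0 and c > 0 such that for every θ* ∈ E and every δ with 0 < δ < min{ c·Φ^{−1}((‖θ*‖_E^{−1} − 1)²), √μ₁ }, the localized Gaussian width satisfies G(E_{θ*} ∩ B(δ)) ≥ c_ℓ·δ·√(1 − ‖θ*‖_E²)·√(k(θ*, δ)). -/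
/-!
Put `r = 9δ/20` and let `J` be the set of axes with `μ_j > r²`. The part of a point of `E` off the
axes in `J` has Euclidean norm at most `r`, so `E_{θ*}` lies within `2r = 9δ/10` of the coordinate
subspace spanned by `J`, whence `k(θ*, δ) ≤ |J|`.

For the width, fix signs `s_j` with `s_j θ*_j ≤ 0` and, given `w`, let `v` have coordinates
`s_j (s_j w_j)⁺` for `j ∈ J`. Moving from `θ*` along `v` does not increase the cross term of
`‖θ* + Δ‖_E²`, and `‖Δ‖_E ≤ ‖Δ‖ / r` on these axes, so the rescaling `Δ` of `v` to length
`ρ = r √(1 - ‖θ*‖_E²)` lies in `E_{θ*} ∩ B(δ)`. Since `⟪w, v⟫ = ‖v‖²`, Cauchy–Schwarz gives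
`sup_Δ ⟪w, Δ⟫ ≥ ρ ‖v‖ ≥ ρ / √|J| · ∑_{j ∈ J} (s_j w_j)⁺`, whose mean is `ρ √|J| · E[g⁺]`.
-/

open MeasureTheory ProbabilityTheory Metric Set Filter
open scoped BigOperators ENNReal NNReal RealInnerProductSpace Classical

noncomputable section

open GaussKol

namespace GaussKol

def gaussianPosPartMean : ℝ := ∫ x, max x 0 ∂gaussianReal 0 1

lemma integrable_max_const_mul_gaussianReal (ε : ℝ) :
    Integrable (fun x => max (ε * x) 0) (gaussianReal 0 1) :=
  (((memLp_id_gaussianReal 1).integrable le_rfl).const_mul ε).pos_part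

lemma gaussianPosPartMean_pos : 0 < gaussianPosPartMean := by
  have hint : Integrable (fun x : ℝ => max x 0) (gaussianReal 0 1) := by
    simpa using integrable_max_const_mul_gaussianReal 1
  rw [gaussianPosPartMean, integral_pos_iff_support_of_nonneg
    (show (0 : ℝ → ℝ) ≤ fun x => max x 0 from fun x => le_max_right _ _) hint]
  have hsupp : Function.support (fun x : ℝ => max x 0) = Ioi 0 := by
    ext x; simp [Function.mem_support]
  rw [hsupp, pos_iff_ne_zero]
  intro h
  have := gaussianReal_absolutelyContinuous' 0 one_ne_zero h
  simp at this

lemma integral_max_neg_gaussianReal :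
    ∫ x, max (-x) 0 ∂gaussianReal 0 1 = gaussianPosPartMean := by
  have h := integral_map (μ := gaussianReal 0 1) (φ := fun x => -x) (f := fun x => max x 0)
    (by fun_prop) (by fun_prop)
  rw [gaussianReal_map_neg, neg_zero] at h
  exact h.symm

lemma integral_max_const_mul_gaussianReal (ε : ℝ) :
    ∫ x, max (ε * x) 0 ∂gaussianReal 0 1 = |ε| * gaussianPosPartMean := by
  rcases le_or_gt 0 ε with hε | hε
  · simp_rw [abs_of_nonneg hε, gaussianPosPartMean, ← integral_const_mul,
      mul_max_of_nonneg _ _ hε, mul_zero]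
  · simp_rw [abs_of_neg hε, ← integral_max_neg_gaussianReal, ← integral_const_mul,
      mul_max_of_nonneg _ _ (neg_nonneg.2 hε.le), mul_zero, neg_mul_neg]

lemma stdGaussian_eq_s2 (d : ℕ) :
    stdGaussian d = ProbabilityTheory.stdGaussian (EuclideanSpace ℝ (Fin d)) :=
  map_pi_eq_stdGaussian

instance (d : ℕ) : IsGaussian (stdGaussian d) := by
  rw [stdGaussian_eq_s2]; infer_instance

lemma integrable_norm_stdGaussian (d : ℕ) :
    Integrable (fun w : EuclideanSpace ℝ (Fin d) => ‖w‖) (stdGaussian d) :=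
  ((IsGaussian.memLp_id _ 1 (by simp)).integrable le_rfl).norm

lemma measurePreserving_apply_stdGaussian {d : ℕ} (j : Fin d) :
    MeasurePreserving (fun w : EuclideanSpace ℝ (Fin d) => w j) (stdGaussian d)
      (gaussianReal 0 1) :=
  (measurePreserving_eval _ j).comp
    (MeasurePreserving.symm _ ⟨(MeasurableEquiv.toLp 2 (Fin d → ℝ)).measurable, rfl⟩)

section SupportFunction

variable {E : Type*} [NormedAddCommGroup E] [InnerProductSpace ℝ E] {S : Set E} {δ : ℝ}

lemma inner_le_mul_of_subset_closedBall (hS : S ⊆ closedBall 0 δ) (w : E) {u : E}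
    (hu : u ∈ S) : ⟪w, u⟫ ≤ ‖w‖ * δ :=
  (real_inner_le_norm w u).trans
    (mul_le_mul_of_nonneg_left (by simpa using hS hu) (norm_nonneg w))

lemma inner_le_biSup_inner (hS : S ⊆ closedBall 0 δ) (w : E) {u : E} (hu : u ∈ S) :
    ⟪w, u⟫ ≤ ⨆ u ∈ S, ⟪w, u⟫ := by
  have hδ : 0 ≤ δ := (norm_nonneg u).trans (by simpa using hS hu)
  have hbdd : BddAbove (range fun u => ⨆ _ : u ∈ S, ⟪w, u⟫) :=
    ⟨‖w‖ * δ, forall_mem_range.2 fun u' =>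
      Real.iSup_le (fun hu' => inner_le_mul_of_subset_closedBall hS w hu') (by positivity)⟩
  exact le_ciSup_of_le hbdd u (ciSup_pos (f := fun _ => ⟪w, u⟫) hu).ge

lemma biSup_inner_nonneg (hS : S ⊆ closedBall 0 δ) (h0 : (0 : E) ∈ S) (w : E) :
    0 ≤ ⨆ u ∈ S, ⟪w, u⟫ := by
  simpa using inner_le_biSup_inner hS w h0

lemma biSup_inner_le (hS : S ⊆ closedBall 0 δ) (h0 : (0 : E) ∈ S) (w : E) :
    ⨆ u ∈ S, ⟪w, u⟫ ≤ ‖w‖ * δ := by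
  have hδ : 0 ≤ δ := by simpa using hS h0
  exact Real.iSup_le (fun u => Real.iSup_le (fun hu => inner_le_mul_of_subset_closedBall hS w hu)
    (by positivity)) (by positivity)

lemma lipschitzWith_biSup_inner (hS : S ⊆ closedBall 0 δ) (h0 : (0 : E) ∈ S) :
    LipschitzWith δ.toNNReal fun w : E => ⨆ u ∈ S, ⟪w, u⟫ := by
  refine LipschitzWith.of_le_add_mul' δ fun w w' => ?_
  have hδ : 0 ≤ δ := by simpa using hS h0
  have hrhs : 0 ≤ (⨆ u ∈ S, ⟪w', u⟫) + δ * dist w w' :=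
    add_nonneg (biSup_inner_nonneg hS h0 w') (by positivity)
  refine Real.iSup_le (fun u => Real.iSup_le (fun hu => ?_) hrhs) hrhs
  calc ⟪w, u⟫ = ⟪w', u⟫ + ⟪w - w', u⟫ := by rw [inner_sub_left]; ring
    _ ≤ (⨆ u ∈ S, ⟪w', u⟫) + δ * dist w w' := by
      rw [dist_eq_norm, mul_comm δ]
      exact add_le_add (inner_le_biSup_inner hS w' hu)
        (inner_le_mul_of_subset_closedBall hS _ hu)

lemma integrable_biSup_inner [MeasurableSpace E] [OpensMeasurableSpace E] {P : Measure E}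
    (hP : Integrable (fun w => ‖w‖) P) (hS : S ⊆ closedBall 0 δ) (h0 : (0 : E) ∈ S) :
    Integrable (fun w => ⨆ u ∈ S, ⟪w, u⟫) P := by
  refine (hP.mul_const δ).mono'
    (lipschitzWith_biSup_inner hS h0).continuous.aestronglyMeasurable (ae_of_all _ fun w => ?_)
  rw [Real.norm_eq_abs, abs_of_nonneg (biSup_inner_nonneg hS h0 w)]
  exact biSup_inner_le hS h0 w

end SupportFunction

section CoordSubspace

variable {ι : Type*} [Fintype ι]

def coordSubspace (s : Set ι) : Submodule ℝ (EuclideanSpace ℝ ι) :=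
  (Pi.spanSubset ℝ s).comap (WithLp.linearEquiv 2 ℝ (ι → ℝ)).toLinearMap

lemma mem_coordSubspace {s : Set ι} {v : EuclideanSpace ℝ ι} :
    v ∈ coordSubspace s ↔ ∀ i ∉ s, v i = 0 :=
  Pi.mem_spanSubset_iff

lemma finrank_coordSubspace (s : Set ι) : Module.finrank ℝ (coordSubspace s) = s.ncard := by
  rw [coordSubspace, Submodule.comap_equiv_eq_map_symm, LinearEquiv.finrank_map_eq,
    Pi.dim_spanSubset]

end CoordSubspace

variable {d : ℕ}

section KolmogorovWidth

lemma norm_sub_projK_le (K : Submodule ℝ (EuclideanSpace ℝ (Fin d)))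
    (x : EuclideanSpace ℝ (Fin d)) {z : EuclideanSpace ℝ (Fin d)} (hz : z ∈ K) :
    ‖x - projK K x‖ ≤ ‖x - z‖ := by
  have hbdd : BddBelow (range fun v : K => ‖x - (v : EuclideanSpace ℝ (Fin d))‖) :=
    ⟨0, forall_mem_range.2 fun _ => norm_nonneg _⟩
  rw [projK, ← Submodule.starProjection_apply, Submodule.starProjection_minimal]
  exact ciInf_le hbdd ⟨z, hz⟩

lemma projK_sub (K : Submodule ℝ (EuclideanSpace ℝ (Fin d))) (x y : EuclideanSpace ℝ (Fin d)) :
    projK K (x - y) = projK K x - projK K y := by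
  simp [projK]

lemma kolWidth_le {k : ℕ} {S : Set (EuclideanSpace ℝ (Fin d))} {r : ℝ}
    (K : Submodule ℝ (EuclideanSpace ℝ (Fin d))) (hK : Module.finrank ℝ K = k) (hr : 0 ≤ r)
    (h : ∀ θ ∈ S, ‖θ - projK K θ‖ ≤ r) : kolWidth k S ≤ r := by
  have hbdd : BddBelow (range fun K : {K : Submodule ℝ (EuclideanSpace ℝ (Fin d)) //
      Module.finrank ℝ K = k} => ⨆ θ ∈ S, ‖θ - projK K.1 θ‖) :=
    ⟨0, forall_mem_range.2 fun _ => Real.iSup_nonneg fun _ => Real.iSup_nonneg fun _ =>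
      norm_nonneg _⟩
  exact (ciInf_le hbdd ⟨K, hK⟩).trans (Real.iSup_le (fun θ => Real.iSup_le (h θ) hr) hr)

end KolmogorovWidth

variable {μ : Fin d → ℝ} {θs : EuclideanSpace ℝ (Fin d)}

lemma enormSq_nonneg (hμ : ∀ i, 0 ≤ μ i) (θ : EuclideanSpace ℝ (Fin d)) :
    0 ≤ enormSq μ θ :=
  Finset.sum_nonneg fun i _ => div_nonneg (sq_nonneg _) (hμ i)

lemma norm_sub_projK_coordSubspace_le {s : Set (Fin d)} {r : ℝ} (hμ : ∀ i, 0 < μ i)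
    (hr : 0 ≤ r) (hs : ∀ i ∉ s, μ i ≤ r ^ 2) {y : EuclideanSpace ℝ (Fin d)}
    (hy : y ∈ ellipse μ) : ‖y - projK (coordSubspace s) y‖ ≤ r := by
  set z : EuclideanSpace ℝ (Fin d) := WithLp.toLp 2 fun i => if i ∈ s then y i else 0
  have hz : z ∈ coordSubspace s := mem_coordSubspace.2 fun i hi => if_neg hi
  have hterm : ∀ i, (y - z) i ^ 2 ≤ r ^ 2 * (y i ^ 2 / μ i) := by
    intro i
    by_cases hi : i ∈ s
    · simp only [z, PiLp.sub_apply, hi, if_true, sub_self, zero_pow two_ne_zero]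
      exact mul_nonneg (sq_nonneg r) (div_nonneg (sq_nonneg _) (hμ i).le)
    · simp only [z, PiLp.sub_apply, hi, if_false, sub_zero]
      rw [mul_div_assoc', le_div_iff₀ (hμ i), mul_comm]
      exact mul_le_mul_of_nonneg_right (hs i hi) (sq_nonneg _)
  have hsq : ‖y - z‖ ^ 2 ≤ r ^ 2 :=
    calc ‖y - z‖ ^ 2 = ∑ i, (y - z) i ^ 2 := EuclideanSpace.real_norm_sq_eq _
      _ ≤ ∑ i, r ^ 2 * (y i ^ 2 / μ i) := Finset.sum_le_sum fun i _ => hterm i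
      _ = r ^ 2 * enormSq μ y := Finset.mul_sum _ _ _ |>.symm
      _ ≤ r ^ 2 := mul_le_of_le_one_right (sq_nonneg r) hy
  exact (norm_sub_projK_le _ y hz).trans
    ((pow_le_pow_iff_left₀ (norm_nonneg _) hr two_ne_zero).1 hsq)

lemma kolWidth_le_of_subset_shiftedEllipse {s : Set (Fin d)} {r : ℝ}
    {T : Set (EuclideanSpace ℝ (Fin d))} (hμ : ∀ i, 0 < μ i) (hr : 0 ≤ r)
    (hs : ∀ i ∉ s, μ i ≤ r ^ 2) (hθs : θs ∈ ellipse μ) (hT : T ⊆ shiftedEllipse μ θs) :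
    kolWidth s.ncard T ≤ 2 * r := by
  refine kolWidth_le (coordSubspace s) (finrank_coordSubspace s) (by positivity) ?_
  rintro _ hΔ
  obtain ⟨x, hx, rfl⟩ := hT hΔ
  let P := projK (coordSubspace s)
  calc ‖x - θs - P (x - θs)‖ = ‖(x - P x) - (θs - P θs)‖ := by
        rw [show P (x - θs) = P x - P θs from projK_sub _ _ _]; abel_nf
    _ ≤ ‖x - P x‖ + ‖θs - P θs‖ := norm_sub_le _ _
    _ ≤ r + r := add_le_add (norm_sub_projK_coordSubspace_le hμ hr hs hx)
        (norm_sub_projK_coordSubspace_le hμ hr hs hθs)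
    _ = 2 * r := by ring

lemma critDim_le {η δ : ℝ} {k : ℕ} (hk : 0 < d → 1 ≤ k) (hkd : k ≤ d)
    (hw : kolWidth k (shiftedEllipse μ θs ∩ closedBall 0 ((1 - η) * δ)) ≤ 9 / 10 * δ) :
    critDim η μ θs δ ≤ k := by
  rcases Nat.eq_zero_or_pos d with rfl | hd
  · refine (Nat.sInf_eq_zero.2 (Or.inr (eq_empty_of_forall_notMem fun k hk => ?_))).trans_le
      k.zero_le
    exact absurd (hk.1.trans hk.2.1) (by norm_num)
  · exact Nat.sInf_le ⟨hk hd, hkd, hw⟩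

lemma enormSq_add_le (hμ : ∀ i, 0 ≤ μ i) {θ v : EuclideanSpace ℝ (Fin d)}
    (h : ∀ i, θ i * v i ≤ 0) : enormSq μ (θ + v) ≤ enormSq μ θ + enormSq μ v := by
  rw [enormSq, enormSq, enormSq, ← Finset.sum_add_distrib]
  refine Finset.sum_le_sum fun i _ => ?_
  rw [← add_div, PiLp.add_apply]
  exact div_le_div_of_nonneg_right (by nlinarith [h i]) (hμ i)

lemma mul_enormSq_le_norm_sq (hμ : ∀ i, 0 < μ i) {r : ℝ} {v : EuclideanSpace ℝ (Fin d)}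
    (hv : ∀ i, v i ≠ 0 → r ≤ μ i) : r * enormSq μ v ≤ ‖v‖ ^ 2 := by
  rw [EuclideanSpace.real_norm_sq_eq, enormSq, Finset.mul_sum]
  refine Finset.sum_le_sum fun i _ => ?_
  rcases eq_or_ne (v i) 0 with h | h
  · simp [h]
  · rw [mul_div_assoc', div_le_iff₀ (hμ i), mul_comm]
    exact mul_le_mul_of_nonneg_left (hv i h) (sq_nonneg _)

variable {r ρ δ : ℝ}

lemma smul_mem_shiftedEllipse_inter_closedBall (hμ : ∀ i, 0 < μ i)
    (hr : 0 < r) (hρ : 0 ≤ ρ) (hρδ : ρ ≤ δ) (hρr : ρ ^ 2 ≤ r ^ 2 * (1 - enormSq μ θs))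
    {v : EuclideanSpace ℝ (Fin d)} (hv : ∀ i, v i ≠ 0 → r ^ 2 ≤ μ i)
    (hvθ : ∀ i, θs i * v i ≤ 0) :
    (ρ / ‖v‖) • v ∈ shiftedEllipse μ θs ∩ closedBall 0 δ := by
  set Δ := (ρ / ‖v‖) • v
  have hnorm : ‖Δ‖ ≤ ρ := by
    rw [norm_smul, Real.norm_of_nonneg (by positivity)]
    rcases eq_or_ne ‖v‖ 0 with h | h
    · simpa [h] using hρ
    · rw [div_mul_cancel₀ _ h]
  have hΔ : r ^ 2 * enormSq μ Δ ≤ r ^ 2 * (1 - enormSq μ θs) :=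
    calc r ^ 2 * enormSq μ Δ ≤ ‖Δ‖ ^ 2 :=
          mul_enormSq_le_norm_sq hμ fun i hi => hv i (right_ne_zero_of_mul hi)
      _ ≤ ρ ^ 2 := pow_le_pow_left₀ (norm_nonneg _) hnorm 2
      _ ≤ _ := hρr
  have hmem : θs + Δ ∈ ellipse μ :=
    calc enormSq μ (θs + Δ) ≤ enormSq μ θs + enormSq μ Δ :=
          enormSq_add_le (fun i => (hμ i).le) fun i => by
            simpa [Δ, mul_left_comm] using mul_nonpos_of_nonneg_of_nonpos
              (by positivity : 0 ≤ ρ / ‖v‖) (hvθ i)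
      _ ≤ 1 := by linarith [le_of_mul_le_mul_left hΔ (by positivity)]
  exact ⟨⟨θs + Δ, hmem, add_sub_cancel_left θs Δ⟩, mem_closedBall_zero_iff.2 (hnorm.trans hρδ)⟩

lemma div_sqrt_card_mul_sum_le_biSup_inner (hμ : ∀ i, 0 < μ i) (hr : 0 < r) (hρ : 0 ≤ ρ)
    (hρδ : ρ ≤ δ) (hρr : ρ ^ 2 ≤ r ^ 2 * (1 - enormSq μ θs)) {J : Finset (Fin d)}
    (hJ : ∀ j ∈ J, r ^ 2 ≤ μ j) {s : Fin d → ℝ} (hs : ∀ j, |s j| = 1)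
    (hsθ : ∀ j, s j * θs j ≤ 0) (w : EuclideanSpace ℝ (Fin d)) :
    ρ / √J.card * ∑ j ∈ J, max (s j * w j) 0 ≤
      ⨆ u ∈ shiftedEllipse μ θs ∩ closedBall 0 δ, ⟪w, u⟫ := by
  set m : Fin d → ℝ := fun j => max (s j * w j) 0
  set v : EuclideanSpace ℝ (Fin d) := WithLp.toLp 2 fun j => if j ∈ J then s j * m j else 0
  have hnorm : ‖v‖ ^ 2 = ∑ j ∈ J, m j ^ 2 := by
    simp [EuclideanSpace.real_norm_sq_eq, v, ite_pow, Finset.sum_ite_mem, mul_pow,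
      ← sq_abs (s _), hs]
  have hinner : ⟪w, v⟫ = ‖v‖ ^ 2 := by
    have hself : ∀ x : ℝ, x * max x 0 = max x 0 ^ 2 := fun x => by
      rcases le_total x 0 with h | h <;> simp [h, sq]
    rw [hnorm]
    simp only [PiLp.inner_apply, RCLike.inner_apply, Real.ringHom_apply, ite_mul, zero_mul,
      Finset.sum_ite_mem, Finset.univ_inter, v]
    exact Finset.sum_congr rfl fun j _ => by
      rw [show s j * m j * w j = s j * w j * m j by ring]
      exact hself _
  have hmem := smul_mem_shiftedEllipse_inter_closedBall hμ hr hρ hρδ hρr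
    (v := v) (fun j hj => hJ j (by by_contra h; exact hj (if_neg h))) fun j => by
      dsimp only [v]
      split_ifs
      · calc θs j * (s j * m j) = s j * θs j * m j := by ring
          _ ≤ 0 := mul_nonpos_of_nonpos_of_nonneg (hsθ j) (le_max_right _ _)
      · rw [mul_zero]
  have hCS : ∑ j ∈ J, m j ≤ √J.card * ‖v‖ := by
    rw [← pow_le_pow_iff_left₀ (Finset.sum_nonneg fun j _ => le_max_right _ _) (by positivity)
      two_ne_zero, mul_pow, Real.sq_sqrt (Nat.cast_nonneg _), hnorm]
    exact sq_sum_le_card_mul_sum_sq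
  calc ρ / √J.card * ∑ j ∈ J, m j ≤ ρ / √J.card * (√J.card * ‖v‖) := by gcongr
    _ = ρ * ‖v‖ * (√J.card / √J.card) := by ring
    _ ≤ ρ * ‖v‖ := mul_le_of_le_one_right (by positivity) (div_self_le_one _)
    _ = ⟪w, (ρ / ‖v‖) • v⟫ := by
      rw [real_inner_smul_right, hinner]
      rcases eq_or_ne ‖v‖ 0 with h | h
      · simp [h]
      · field_simp
    _ ≤ _ := inner_le_biSup_inner inter_subset_right w hmem

lemma mul_sqrt_card_mul_le_gaussianWidth (hμ : ∀ i, 0 < μ i) (hθs : θs ∈ ellipse μ) (hr : 0 < r)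
    (hρ : 0 ≤ ρ) (hρδ : ρ ≤ δ) (hρr : ρ ^ 2 ≤ r ^ 2 * (1 - enormSq μ θs))
    {J : Finset (Fin d)} (hJ : ∀ j ∈ J, r ^ 2 ≤ μ j) :
    ρ * √J.card * gaussianPosPartMean ≤
      gaussianWidth (shiftedEllipse μ θs ∩ closedBall 0 δ) := by
  set s : Fin d → ℝ := fun j => if θs j ≤ 0 then 1 else -1
  have hs : ∀ j, |s j| = 1 := fun j => by dsimp only [s]; split_ifs <;> simp
  have hsθ : ∀ j, s j * θs j ≤ 0 := fun j => by
    dsimp only [s]; split_ifs with h <;> linarith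
  have hint : ∀ j, Integrable (fun w : EuclideanSpace ℝ (Fin d) => max (s j * w j) 0)
      (stdGaussian d) := fun j =>
    (measurePreserving_apply_stdGaussian j).integrable_comp_of_integrable
      (integrable_max_const_mul_gaussianReal (s j))
  have hmean : ∀ j, ∫ w, max (s j * w j) 0 ∂stdGaussian d = gaussianPosPartMean := fun j => by
    have hj := measurePreserving_apply_stdGaussian j
    rw [← integral_map hj.measurable.aemeasurable (f := fun x => max (s j * x) 0) (by fun_prop),
      hj.map_eq, integral_max_const_mul_gaussianReal, hs j, one_mul]
  have hS : shiftedEllipse μ θs ∩ closedBall 0 δ ⊆ closedBall 0 δ := inter_subset_right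
  have h0 : (0 : EuclideanSpace ℝ (Fin d)) ∈ shiftedEllipse μ θs ∩ closedBall 0 δ :=
    ⟨⟨θs, hθs, sub_self θs⟩, mem_closedBall_self (hρ.trans hρδ)⟩
  calc ρ * √J.card * gaussianPosPartMean
      = ∫ w, ρ / √J.card * ∑ j ∈ J, max (s j * w j) 0 ∂stdGaussian d := by
        rw [integral_const_mul, integral_finsetSum _ fun j _ => hint j,
          Finset.sum_congr rfl fun j _ => hmean j, Finset.sum_const, nsmul_eq_mul,
          show ρ / √J.card * (J.card * gaussianPosPartMean) =
            ρ * (J.card / √J.card) * gaussianPosPartMean by ring, Real.div_sqrt]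
    _ ≤ gaussianWidth (shiftedEllipse μ θs ∩ closedBall 0 δ) :=
      integral_mono_of_nonneg
        (ae_of_all _ fun w => mul_nonneg (by positivity)
          (Finset.sum_nonneg fun j _ => le_max_right _ _))
        (integrable_biSup_inner (integrable_norm_stdGaussian d) hS h0)
        (ae_of_all _ (div_sqrt_card_mul_sum_le_biSup_inner hμ hr hρ hρδ hρr hJ hs hsθ))

end GaussKol

theorem localized_gaussian_width_lower_bound_general (η : ℝ) :
    ∃ cl c : ℝ, 0 < cl ∧ 0 < c ∧
      ∀ (d : ℕ) (μ : Fin d → ℝ), (∀ i, 0 < μ i) → (∀ i j : Fin d, i ≤ j → μ j ≤ μ i) →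
        ∀ θs : EuclideanSpace ℝ (Fin d), θs ∈ ellipse μ →
        ∀ δ : ℝ, 0 < δ →
          (∀ hd : 0 < d, δ < Real.sqrt (μ ⟨0, hd⟩)) →
          ENNReal.ofReal δ <
            ENNReal.ofReal c *
              PhiInv η μ θs (((Real.sqrt (enormSq μ θs))⁻¹ - 1) ^ 2) →
          cl * δ * Real.sqrt (1 - enormSq μ θs) * Real.sqrt (critDim η μ θs δ)
            ≤ gaussianWidth (shiftedEllipse μ θs ∩ closedBall 0 δ) := by
  refine ⟨9 / 20 * gaussianPosPartMean, 1, by linarith [gaussianPosPartMean_pos], one_pos, ?_⟩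
  intro d μ hμ _ θs hθs δ hδ hδμ _
  set r := 9 / 20 * δ with hr
  set ρ := r * √(1 - enormSq μ θs)
  set J := Finset.univ.filter fun j => r ^ 2 < μ j
  have hS0 : 0 ≤ 1 - enormSq μ θs := sub_nonneg.2 hθs
  have hcrit : critDim η μ θs δ ≤ J.card := by
    have hw := kolWidth_le_of_subset_shiftedEllipse (s := ↑J) (r := r) hμ (by positivity)
      (fun i hi => not_lt.1 fun h => hi (by simp [J, h])) hθs
      (inter_subset_left (t := closedBall 0 ((1 - η) * δ)))
    rw [Set.ncard_coe_finset] at hw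
    refine critDim_le (fun hd => Finset.card_pos.2 ⟨⟨0, hd⟩, ?_⟩) (Finset.card_le_univ J |>.trans_eq
      (Finset.card_fin d)) (hw.trans_eq (by rw [hr]; ring))
    have := (Real.lt_sqrt hδ.le).1 (hδμ hd)
    simp only [J, Finset.mem_filter, Finset.mem_univ, true_and]
    nlinarith [hr]
  have hρδ : ρ ≤ δ := calc
    ρ ≤ r := mul_le_of_le_one_right (by positivity)
      (Real.sqrt_le_one.2 (by linarith [enormSq_nonneg (fun i => (hμ i).le) θs]))
    _ ≤ δ := by rw [hr]; linarith
  have hwidth := mul_sqrt_card_mul_le_gaussianWidth hμ hθs (by positivity) (by positivity) hρδ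
    (by rw [mul_pow, Real.sq_sqrt hS0]) (J := J) fun j hj => (Finset.mem_filter.1 hj).2.le
  calc 9 / 20 * gaussianPosPartMean * δ * √(1 - enormSq μ θs) * √(critDim η μ θs δ)
      ≤ 9 / 20 * gaussianPosPartMean * δ * √(1 - enormSq μ θs) * √J.card := by
        have := gaussianPosPartMean_pos
        gcongr
    _ = ρ * √J.card * gaussianPosPartMean := by ring
    _ ≤ _ := hwidth

/-- **Theorem 2 (lower bound on the localized Gaussian width).**
There exist universal constants `c_ℓ, c > 0` such that for every `θ* ∈ E` and every
`δ ∈ (0, min{c Φ⁻¹((‖θ*‖_E⁻¹ − 1)²), √μ₁})`,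
`G(E_{θ*} ∩ B(δ)) ≥ c_ℓ δ √(1 − ‖θ*‖_E²) √(k(θ*, δ))`. -/
theorem localized_gaussian_width_lower_bound (η : ℝ) (hη0 : 0 < η) (hη1 : η < 0.1) :
    ∃ cl c : ℝ, 0 < cl ∧ 0 < c ∧
      ∀ (d : ℕ) (μ : Fin d → ℝ), (∀ i, 0 < μ i) → (∀ i j : Fin d, i ≤ j → μ j ≤ μ i) →
        ∀ θs : EuclideanSpace ℝ (Fin d), θs ∈ ellipse μ →
        ∀ δ : ℝ, 0 < δ →
          (∀ hd : 0 < d, δ < Real.sqrt (μ ⟨0, hd⟩)) →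
          ENNReal.ofReal δ <
            ENNReal.ofReal c *
              PhiInv η μ θs (((Real.sqrt (enormSq μ θs))⁻¹ - 1) ^ 2) →
          cl * δ * Real.sqrt (1 - enormSq μ θs) * Real.sqrt (critDim η μ θs δ)
            ≤ gaussianWidth (shiftedEllipse μ θs ∩ closedBall 0 δ) :=
  localized_gaussian_width_lower_bound_general η
end
end

section
/- Let s ≥ 1 and let 𝒱 := {v ∈ ℝ^s : v_i = ±1/√s for every i}. For every k-dimensional linear subspace W ⊆ ℝ^s with 0 ≤ k ≤ s, there exists v ∈ 𝒱 such that ‖v − Π_W(v)‖₂² ≥ 1 − k/s, where Π_W is the orthogonal projection onto W. Consequently, the Kolmogorov k-width of the ℓ∞-ball B_∞(1/√s) := {v ∈ ℝ^s : |v_i| ≤ 1/√s for all i} satisfies W_k(B_∞(1/√s)) ≥ 1 − k/s. -/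
/-!
Average over the `2 ^ s` sign vectors `v_ε` with entries `± 1 / √s`. Distinct coordinates of
`v_ε` are uncorrelated, so the mean of `⟪u, v_ε⟫ ^ 2` is `‖u‖ ^ 2 / s`; summing over an
orthonormal basis of `W`, the mean of `‖Π_W v_ε‖ ^ 2` is `k / s`. Hence some `v_ε` has
`‖Π_W v_ε‖ ^ 2 ≤ k / s`, i.e. `‖v_ε - Π_W v_ε‖ ^ 2 ≥ 1 - k / s` since `‖v_ε‖ = 1`. As
`v_ε ∈ B_∞(1/√s)` and `‖v_ε - Π_W v_ε‖ ≤ 1`, the distance itself is at least its square,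
which bounds the width.
-/

open MeasureTheory ProbabilityTheory Metric Set Filter
open scoped BigOperators ENNReal NNReal RealInnerProductSpace Classical

noncomputable section

open GaussKol

open Module Submodule Bornology

namespace KolmogorovWidth

section Projection

variable {𝕜 E : Type*} [RCLike 𝕜] [NormedAddCommGroup E] [InnerProductSpace 𝕜 E]
  (K : Submodule 𝕜 E) [K.HasOrthogonalProjection] (x : E)

lemma norm_sub_starProjection_sq :
    ‖x - K.starProjection x‖ ^ 2 = ‖x‖ ^ 2 - ‖K.starProjection x‖ ^ 2 := by
  rw [← starProjection_orthogonal_val, norm_sq_eq_add_norm_sq_starProjection x K]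
  ring

lemma norm_sub_starProjection_le : ‖x - K.starProjection x‖ ≤ ‖x‖ := by
  rw [← starProjection_orthogonal_val]
  exact Kᗮ.norm_starProjection_apply_le x

end Projection

def boolSign (b : Bool) : ℝ := if b then 1 else -1

@[simp] lemma boolSign_mul_self (b : Bool) : boolSign b * boolSign b = 1 := by
  cases b <;> norm_num [boolSign]

@[simp] lemma abs_boolSign (b : Bool) : |boolSign b| = 1 := by
  cases b <;> norm_num [boolSign]

section Signs

variable {ι : Type*} [Fintype ι]

/-- For `i ≠ j`, flipping the `i`-th sign is a bijection of the sign patterns that negates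
each summand. -/
lemma sum_boolSign_mul_boolSign (i j : ι) :
    ∑ ε : ι → Bool, boolSign (ε i) * boolSign (ε j) =
      if i = j then (2 : ℝ) ^ Fintype.card ι else 0 := by
  split_ifs with hij
  · subst hij
    simp
  · let flip : (ι → Bool) ≃ (ι → Bool) :=
      Equiv.piCongrRight fun k => if k = i then Equiv.boolNot else Equiv.refl Bool
    have hflip : ∀ ε : ι → Bool,
        -(boolSign (ε i) * boolSign (ε j)) = boolSign (flip ε i) * boolSign (flip ε j) := by
      intro ε
      cases hi : ε i <;> cases hj : ε j <;> simp [flip, Ne.symm hij, hi, hj, boolSign]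
    have := Fintype.sum_equiv flip (fun ε => -(boolSign (ε i) * boolSign (ε j)))
      (fun ε => boolSign (ε i) * boolSign (ε j)) hflip
    rw [Finset.sum_neg_distrib] at this
    linarith

lemma sum_sq_sum_boolSign_mul (u : ι → ℝ) :
    ∑ ε : ι → Bool, (∑ i, boolSign (ε i) * u i) ^ 2 = 2 ^ Fintype.card ι * ∑ i, u i ^ 2 := by
  have expand : ∀ ε : ι → Bool, (∑ i, boolSign (ε i) * u i) ^ 2 =
      ∑ i, ∑ j, u i * u j * (boolSign (ε i) * boolSign (ε j)) := fun ε => by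
    rw [sq, Finset.sum_mul_sum]
    exact Finset.sum_congr rfl fun i _ => Finset.sum_congr rfl fun j _ => by ring
  calc ∑ ε : ι → Bool, (∑ i, boolSign (ε i) * u i) ^ 2
      = ∑ i, ∑ j, u i * u j * ∑ ε : ι → Bool, boolSign (ε i) * boolSign (ε j) := by
        simp only [expand, Finset.mul_sum]
        rw [Finset.sum_comm]
        exact Finset.sum_congr rfl fun i _ => Finset.sum_comm
    _ = 2 ^ Fintype.card ι * ∑ i, u i ^ 2 := by
        simp [sum_boolSign_mul_boolSign, Finset.mul_sum, sq, mul_comm]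

def signVector (ε : ι → Bool) : EuclideanSpace ℝ ι :=
  WithLp.toLp 2 fun i => boolSign (ε i) / √(Fintype.card ι)

lemma signVector_apply (ε : ι → Bool) (i : ι) :
    signVector ε i = boolSign (ε i) / √(Fintype.card ι) := rfl

lemma signVector_apply_eq_or (ε : ι → Bool) (i : ι) :
    signVector ε i = 1 / √(Fintype.card ι) ∨ signVector ε i = -(1 / √(Fintype.card ι)) := by
  cases h : ε i <;> simp [signVector_apply, boolSign, h, neg_div]

lemma abs_signVector_apply (ε : ι → Bool) (i : ι) :
    |signVector ε i| = 1 / √(Fintype.card ι) := by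
  rw [signVector_apply, abs_div, abs_boolSign, abs_of_nonneg (Real.sqrt_nonneg _)]

lemma norm_signVector [Nonempty ι] (ε : ι → Bool) : ‖signVector ε‖ = 1 := by
  have hcard : (0 : ℝ) < Fintype.card ι := by exact_mod_cast Fintype.card_pos
  simp [EuclideanSpace.norm_eq, signVector_apply, Real.sq_sqrt hcard.le, hcard.ne']

lemma sum_inner_signVector_sq (u : EuclideanSpace ℝ ι) :
    ∑ ε : ι → Bool, ⟪u, signVector ε⟫ ^ 2 = 2 ^ Fintype.card ι * ‖u‖ ^ 2 / Fintype.card ι := by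
  have inner_sq : ∀ ε : ι → Bool,
      ⟪u, signVector ε⟫ ^ 2 = (∑ i, boolSign (ε i) * u i) ^ 2 / Fintype.card ι := fun ε => by
    have : ⟪u, signVector ε⟫ = (∑ i, boolSign (ε i) * u i) / √(Fintype.card ι) := by
      simp [PiLp.inner_apply, signVector_apply, Finset.sum_div, div_mul_eq_mul_div]
    rw [this, div_pow, Real.sq_sqrt (Nat.cast_nonneg _)]
  simp only [inner_sq, ← Finset.sum_div, sum_sq_sum_boolSign_mul, EuclideanSpace.real_norm_sq_eq]

lemma sum_norm_starProjection_signVector_sq (W : Submodule ℝ (EuclideanSpace ℝ ι)) :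
    ∑ ε : ι → Bool, ‖W.starProjection (signVector ε)‖ ^ 2 =
      2 ^ Fintype.card ι * finrank ℝ W / Fintype.card ι := by
  let b := stdOrthonormalBasis ℝ W
  have parseval : ∀ x, ‖W.starProjection x‖ ^ 2 = ∑ j, ⟪(b j : EuclideanSpace ℝ ι), x⟫ ^ 2 :=
    fun x => by
      change ‖(W.orthogonalProjectionOnto x : EuclideanSpace ℝ ι)‖ ^ 2 = _
      rw [norm_coe, ← b.sum_sq_inner_right]
      simp
  simp only [parseval]
  rw [Finset.sum_comm]
  simp [sum_inner_signVector_sq, norm_coe, b.orthonormal.1]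
  ring

lemma exists_one_sub_div_le_norm_sub_starProjection_signVector_sq [Nonempty ι]
    (W : Submodule ℝ (EuclideanSpace ℝ ι)) :
    ∃ ε : ι → Bool, 1 - (finrank ℝ W : ℝ) / Fintype.card ι ≤
      ‖signVector ε - W.starProjection (signVector ε)‖ ^ 2 := by
  obtain ⟨ε, -, hε⟩ := Finset.exists_le_of_sum_le Finset.univ_nonempty
    (f := fun ε : ι → Bool => ‖W.starProjection (signVector ε)‖ ^ 2)
    (g := fun _ => (finrank ℝ W : ℝ) / Fintype.card ι) <| by
      rw [sum_norm_starProjection_signVector_sq]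
      simp [mul_div_assoc]
  refine ⟨ε, ?_⟩
  rw [norm_sub_starProjection_sq, norm_signVector]
  linarith

end Signs

lemma exists_submodule_finrank_eq {K V : Type*} [DivisionRing K] [AddCommGroup V] [Module K V]
    [FiniteDimensional K V] {k : ℕ} (hk : k ≤ finrank K V) :
    ∃ W : Submodule K V, finrank K W = k := by
  let b := Module.finBasis K V
  refine ⟨span K (Set.range (b ∘ Fin.castLE hk)), ?_⟩
  rw [finrank_span_eq_card (b.linearIndependent.comp _ (Fin.castLE_injective hk)),
    Fintype.card_fin]

lemma isBounded_setOf_forall_abs_le (ι : Type*) [Fintype ι] (r : ℝ) :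
    IsBounded {v : EuclideanSpace ℝ ι | ∀ i, |v i| ≤ r} := by
  have box : {v : EuclideanSpace ℝ ι | ∀ i, |v i| ≤ r} =
      WithLp.ofLp ⁻¹' Set.univ.pi fun _ => Metric.closedBall 0 r := by
    ext v
    simp
  rw [box]
  exact (PiLp.antilipschitzWith_ofLp 2 _).isBounded_preimage
    (IsBounded.pi fun _ => Metric.isBounded_closedBall)

@[simp] lemma projK_eq_starProjection {d : ℕ} (K : Submodule ℝ (EuclideanSpace ℝ (Fin d)))
    (x : EuclideanSpace ℝ (Fin d)) : projK K x = K.starProjection x := rfl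

lemma le_kolWidth {d k : ℕ} {S : Set (EuclideanSpace ℝ (Fin d))} {c : ℝ} (hk : k ≤ d)
    (hS : IsBounded S)
    (h : ∀ K : Submodule ℝ (EuclideanSpace ℝ (Fin d)), finrank ℝ K = k →
      ∃ θ ∈ S, c ≤ ‖θ - projK K θ‖) :
    c ≤ kolWidth k S := by
  obtain ⟨K₀, hK₀⟩ := exists_submodule_finrank_eq (K := ℝ) (V := EuclideanSpace ℝ (Fin d))
    (by simpa using hk)
  have : Nonempty {K : Submodule ℝ (EuclideanSpace ℝ (Fin d)) // finrank ℝ K = k} :=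
    ⟨⟨K₀, hK₀⟩⟩
  obtain ⟨C, hC⟩ := hS.exists_norm_le
  refine le_ciInf fun K => ?_
  obtain ⟨θ, hθS, hθ⟩ := h K.1 K.2
  refine hθ.trans (le_ciSup₂ (f := fun θ (_ : θ ∈ S) => ‖θ - projK K.1 θ‖) ⟨C, ?_⟩ θ hθS)
  simp only [mem_upperBounds, Set.mem_iUnion, Set.mem_range]
  rintro _ ⟨θ', hθ', rfl⟩
  exact (norm_sub_starProjection_le K.1 θ').trans (hC θ' hθ')

end KolmogorovWidth

open KolmogorovWidth in
/-- **Kolmogorov width of the `ℓ∞`-ball of radius `1/√s`.**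
For every `k`-dimensional subspace `W ⊆ ℝ^s` there is a sign vector `v ∈ 𝒱` (with entries
`±1/√s`) satisfying `‖v − Π_W v‖₂² ≥ 1 − k/s`.  Consequently
`W_k(B_∞(1/√s)) ≥ 1 − k/s`. -/
theorem kolWidth_linfty_ball_lower {s : ℕ} (hs : 1 ≤ s) :
    (∀ k : ℕ, k ≤ s → ∀ W : Submodule ℝ (EuclideanSpace ℝ (Fin s)),
      Module.finrank ℝ W = k →
      ∃ v : EuclideanSpace ℝ (Fin s),
        (∀ i, v i = 1 / Real.sqrt s ∨ v i = -(1 / Real.sqrt s)) ∧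
        1 - (k : ℝ) / s ≤ ‖v - projK W v‖ ^ 2) ∧
    (∀ k : ℕ, k ≤ s →
      1 - (k : ℝ) / s ≤
        kolWidth k {v : EuclideanSpace ℝ (Fin s) | ∀ i, |v i| ≤ 1 / Real.sqrt s}) := by
  have : Nonempty (Fin s) := ⟨⟨0, hs⟩⟩
  have far : ∀ W : Submodule ℝ (EuclideanSpace ℝ (Fin s)), ∃ ε : Fin s → Bool,
      1 - (finrank ℝ W : ℝ) / s ≤ ‖signVector ε - projK W (signVector ε)‖ ^ 2 := by
    simpa using exists_one_sub_div_le_norm_sub_starProjection_signVector_sq (ι := Fin s)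
  refine ⟨?_, fun k hk => le_kolWidth hk (isBounded_setOf_forall_abs_le _ _) ?_⟩
  · rintro k - W rfl
    obtain ⟨ε, hε⟩ := far W
    exact ⟨signVector ε, by simpa using signVector_apply_eq_or ε, hε⟩
  · rintro W rfl
    obtain ⟨ε, hε⟩ := far W
    refine ⟨signVector ε, fun i => by simp [abs_signVector_apply], hε.trans ?_⟩
    have hle : ‖signVector ε - projK W (signVector ε)‖ ≤ 1 :=
      norm_signVector ε ▸ norm_sub_starProjection_le W _
    exact pow_le_of_le_one (norm_nonneg _) hle two_ne_zero
end
end
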